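/- Let Λ be a countable finitely aligned category of paths, v a vertex, and Δ ⊆ vΛ a finite subset. Then Δ is exhaustive if and only if v∂Λ ⊆ ⋃_{α∈Δ} {C ∈ vΛ* : α ∈ C}. -/

import Mathlib

universe u v

/-- A category of paths: a small category (objects identified with identity
morphisms) with left and right cancellation and no inverses. -/
structure CategoryOfPaths (Λ : Type u) where
  s : Λ → Λ
  r : Λ → Λ
  comp : Λ → Λ → Λ
  s_comp : ∀ {α β : Λ}, s α = r β → s (comp α β) = s β
  r_comp : ∀ {α β : Λ}, s α = r β → r (comp α β) = r α
  comp_assoc : ∀ {α β γ : Λ}, s α = r β → s β = r γ →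
    comp (comp α β) γ = comp α (comp β γ)
  id_comp : ∀ α : Λ, comp (r α) α = α
  comp_id : ∀ α : Λ, comp α (s α) = α
  s_r : ∀ α : Λ, s (r α) = r α
  r_r : ∀ α : Λ, r (r α) = r α
  r_s : ∀ α : Λ, r (s α) = s α
  s_s : ∀ α : Λ, s (s α) = s α
  left_cancel : ∀ {α β γ : Λ}, s α = r β → s α = r γ → comp α β = comp α γ → β = γ
  right_cancel : ∀ {β γ α : Λ}, s β = r α → s γ = r α → comp β α = comp γ α → β = γ
  no_inverses : ∀ {α β : Λ}, s α = r β → comp α β = s β → α = s β ∧ β = s β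

variable {Λ : Type u}

/-- The tail set `αΛ`. -/
def pTail (C : CategoryOfPaths Λ) (α : Λ) : Set Λ :=
  {x | ∃ β, C.s α = C.r β ∧ x = C.comp α β}

/-- `vΛ`, the paths with range `v`. -/
def pRng (C : CategoryOfPaths Λ) (w : Λ) : Set Λ := {α | C.r α = w}

/-- `Λv`, the paths with source `v`. -/
def pSrc (C : CategoryOfPaths Λ) (w : Λ) : Set Λ := {α | C.s α = w}

/-- `[β]`, the initial segments of `β`. -/
def pSeg (C : CategoryOfPaths Λ) (β : Λ) : Set Λ := {α | β ∈ pTail C α}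

/-- `α ⋔ β`. -/
def pMeets (C : CategoryOfPaths Λ) (α β : Λ) : Prop :=
  (pTail C α ∩ pTail C β).Nonempty

/-- `αE`. -/
def pMulSet (C : CategoryOfPaths Λ) (α : Λ) (E : Set Λ) : Set Λ :=
  {x | ∃ β ∈ E, C.s α = C.r β ∧ x = C.comp α β}

/-- `σ^α(E ∩ αΛ)`, computed inside an ambient subcategory `S`. -/
def pShiftIn (C : CategoryOfPaths Λ) (S : Set Λ) (α : Λ) (E : Set Λ) : Set Λ :=
  {β | β ∈ S ∧ C.s α = C.r β ∧ C.comp α β ∈ E}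

/-- `σ^α(E ∩ αΛ)`. -/
def pShift (C : CategoryOfPaths Λ) (α : Λ) (E : Set Λ) : Set Λ :=
  {β | C.s α = C.r β ∧ C.comp α β ∈ E}

/-- `⋁F`: the minimal common extensions of `F`. -/
def pMinExt (C : CategoryOfPaths Λ) (F : Set Λ) : Set Λ :=
  {ε | (∀ α ∈ F, ε ∈ pTail C α) ∧
    ∀ γ, (∀ α ∈ F, γ ∈ pTail C α) → ε ∈ pTail C γ → γ = ε}

/-- `α ∨ β`: the minimal common extensions of `α` and `β`. -/
def pMinCE (C : CategoryOfPaths Λ) (α β : Λ) : Set Λ := pMinExt C {α, β}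

/-- A subcategory of a category of paths, as a set of morphisms. -/
structure IsSubcategory (C : CategoryOfPaths Λ) (Λ₀ : Set Λ) : Prop where
  comp_mem : ∀ {α β : Λ}, α ∈ Λ₀ → β ∈ Λ₀ → C.s α = C.r β → C.comp α β ∈ Λ₀
  s_mem : ∀ {α : Λ}, α ∈ Λ₀ → C.s α ∈ Λ₀
  r_mem : ∀ {α : Λ}, α ∈ Λ₀ → C.r α ∈ Λ₀

/-- A finitely aligned category of paths. -/
def FinitelyAligned (C : CategoryOfPaths Λ) : Prop :=
  ∀ α β : Λ, ∃ G : Set Λ, G.Finite ∧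
    pTail C α ∩ pTail C β = ⋃ ε ∈ G, pTail C ε

/-- A finitely aligned relative category of paths `(Λ₀, Λ)`. -/
def RelFinitelyAligned (C : CategoryOfPaths Λ) (Λ₀ : Set Λ) : Prop :=
  (∀ α ∈ Λ₀, ∀ β ∈ Λ₀, ∃ G : Set Λ, G.Finite ∧ G ⊆ Λ₀ ∧
      pTail C α ∩ pTail C β = ⋃ ε ∈ G, pTail C ε) ∧
  (∀ α ∈ Λ₀, pTail C α ∩ Λ₀ = pMulSet C α Λ₀)

/-- A ring of sets: contains `∅` and is closed under `∪`, `∩`, and `\`. -/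
def IsSetRing {γ : Type v} (R : Set (Set γ)) : Prop :=
  ∅ ∈ R ∧ (∀ E ∈ R, ∀ F ∈ R, E ∪ F ∈ R) ∧ (∀ E ∈ R, ∀ F ∈ R, E ∩ F ∈ R) ∧
    (∀ E ∈ R, ∀ F ∈ R, E \ F ∈ R)

/-- A ring of sets on `S`: a ring of sets all of whose members are subsets of `S`. -/
def IsSetRingOn {γ : Type v} (S : Set γ) (R : Set (Set γ)) : Prop :=
  IsSetRing R ∧ ∀ E ∈ R, E ⊆ S

/-- The ring of sets generated by a collection. -/
def setRingGen {γ : Type v} (G : Set (Set γ)) : Set (Set γ) :=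
  ⋂₀ {R | IsSetRing R ∧ G ⊆ R}

/-- The ring of sets on `S` generated by a collection. -/
def setRingGenOn {γ : Type v} (S : Set γ) (G : Set (Set γ)) : Set (Set γ) :=
  ⋂₀ {R | IsSetRingOn S R ∧ G ⊆ R}

/-- A zigzag: a list of pairs `(αᵢ, βᵢ)` with `r αᵢ = r βᵢ` and `s αᵢ₊₁ = s βᵢ`. -/
def IsZigzag (C : CategoryOfPaths Λ) (l : List (Λ × Λ)) : Prop :=
  (∀ p ∈ l, C.r p.1 = C.r p.2) ∧ l.Chain' (fun p q => C.s q.1 = C.s p.2)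

/-- The (graph of the) zigzag map `φ_ζ = σ^{α₁} β₁ ⋯ σ^{αₙ} βₙ`, computed
inside an ambient subcategory `S`. -/
def zigzagRelIn (C : CategoryOfPaths Λ) (S : Set Λ) : List (Λ × Λ) → Λ → Λ → Prop
  | [], x, y => x = y ∧ x ∈ S
  | p :: rest, x, y => ∃ z, zigzagRelIn C S rest x z ∧ C.s p.2 = C.r z ∧
      C.s p.1 = C.r y ∧ y ∈ S ∧ C.comp p.2 z = C.comp p.1 y

/-- `A(ζ)`: the domain of the zigzag map. -/
def zigzagDomIn (C : CategoryOfPaths Λ) (S : Set Λ) (l : List (Λ × Λ)) : Set Λ :=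
  {x | ∃ y, zigzagRelIn C S l x y}

/-- `𝒟(Λ₀,Λ)⁰_v`: nonempty zigzag sets with entries in `Λ₀` and source `v`,
computed inside the ambient subcategory `S`. -/
def relD0 (C : CategoryOfPaths Λ) (Λ₀ S : Set Λ) (w : Λ) : Set (Set Λ) :=
  {E | E.Nonempty ∧ ∃ (l : List (Λ × Λ)) (h : l ≠ []),
    IsZigzag C l ∧ (∀ p ∈ l, p.1 ∈ Λ₀ ∧ p.2 ∈ Λ₀) ∧
    C.s (l.getLast h).2 = w ∧ E = zigzagDomIn C S l}

/-- `𝒜(Λ₀,Λ)_v`: the ring of sets generated by the zigzag sets. -/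
def relAring (C : CategoryOfPaths Λ) (Λ₀ S : Set Λ) (w : Λ) : Set (Set Λ) :=
  setRingGenOn {α | α ∈ S ∧ C.r α = w} (relD0 C Λ₀ S w)

/-- A filter in a ring of sets. -/
def IsFilterIn {γ : Type v} (R U : Set (Set γ)) : Prop :=
  U.Nonempty ∧ U ⊆ R ∧ (∀ E ∈ U, E.Nonempty) ∧
    (∀ E ∈ U, ∀ F ∈ U, E ∩ F ∈ U) ∧ (∀ E ∈ U, ∀ F ∈ R, E ⊆ F → F ∈ U)

/-- An ultrafilter in a ring of sets: a maximal filter. -/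
def IsUltrafilterIn {γ : Type v} (R U : Set (Set γ)) : Prop :=
  IsFilterIn R U ∧ ∀ V, IsFilterIn R V → U ⊆ V → V = U

/-- A filter base in a ring of sets. -/
def IsFilterBaseIn {γ : Type v} (R B : Set (Set γ)) : Prop :=
  B.Nonempty ∧ B ⊆ R ∧ (∀ E ∈ B, E.Nonempty) ∧
    ∀ E ∈ B, ∀ F ∈ B, ∃ G ∈ B, G ⊆ E ∩ F

/-- The filter generated by a filter base. -/
def filterGenBy {γ : Type v} (R B : Set (Set γ)) : Set (Set γ) :=
  {E | E ∈ R ∧ ∃ F ∈ B, F ⊆ E}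

/-- An ultrafilter base in a ring of sets. -/
def IsUltrafilterBaseIn {γ : Type v} (R B : Set (Set γ)) : Prop :=
  IsFilterBaseIn R B ∧ IsUltrafilterIn R (filterGenBy R B)

/-- A Boolean ring homomorphism defined on a ring of sets `A` with values in a
generalized Boolean algebra. -/
def IsBRHomOn {γ : Type v} {R : Type*} [GeneralizedBooleanAlgebra R]
    (A : Set (Set γ)) (ν : Set γ → R) : Prop :=
  ν ∅ = ⊥ ∧ (∀ E ∈ A, ∀ F ∈ A, ν (E ∪ F) = ν E ⊔ ν F) ∧
    (∀ E ∈ A, ∀ F ∈ A, ν (E ∩ F) = ν E ⊓ ν F) ∧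
    (∀ E ∈ A, ∀ F ∈ A, ν (E \ F) = ν E \ ν F)

/-- `𝒜_v`: the ring of sets on `vΛ` generated by the tail sets. -/
def tailRing (C : CategoryOfPaths Λ) (w : Λ) : Set (Set Λ) :=
  setRingGenOn (pRng C w) {E | ∃ α, C.r α = w ∧ E = pTail C α}

/-- A directed subset. -/
def pDirected (C : CategoryOfPaths Λ) (x : Set Λ) : Prop :=
  ∀ α ∈ x, ∀ β ∈ x, (pTail C α ∩ pTail C β ∩ x).Nonempty

/-- A hereditary subset. -/
def pHereditary (C : CategoryOfPaths Λ) (x : Set Λ) : Prop :=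
  ∀ γ ∈ x, ∀ α : Λ, γ ∈ pTail C α → α ∈ x

/-- `vΛ*`: the nonempty directed hereditary subsets of `vΛ`. -/
def lamStar (C : CategoryOfPaths Λ) (w : Λ) : Set (Set Λ) :=
  {x | x.Nonempty ∧ x ⊆ pRng C w ∧ pDirected C x ∧ pHereditary C x}

/-- `vΛ**`: the maximal directed subsets of `vΛ`. -/
def lamStarStar (C : CategoryOfPaths Λ) (w : Λ) : Set (Set Λ) :=
  {x | x ⊆ pRng C w ∧ pDirected C x ∧
    ∀ y, y ⊆ pRng C w → pDirected C y → x ⊆ y → y = x}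

/-- `αx = ⋃_{γ ∈ x} [αγ]` for `x ∈ s(α)Λ*`. -/
def pMulStar (C : CategoryOfPaths Λ) (α : Λ) (x : Set Λ) : Set Λ :=
  {δ | ∃ γ ∈ x, C.s α = C.r γ ∧ C.comp α γ ∈ pTail C δ}

/-- `𝒰_{C,0}`. -/
def UC0 (C : CategoryOfPaths Λ) (w : Λ) (x : Set Λ) : Set (Set Λ) :=
  {E | E ∈ tailRing C w ∧ ∃ α ∈ x, pTail C α ⊆ E}

/-- `𝒰_C`. -/
def UC (C : CategoryOfPaths Λ) (w : Λ) (x : Set Λ) : Set (Set Λ) :=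
  {E | E ∈ tailRing C w ∧ ∃ α ∈ x, x ∩ pTail C α ⊆ E}

/-- `X_v = vΛ*` as a type. -/
abbrev Xv (C : CategoryOfPaths Λ) (w : Λ) : Type u := {x : Set Λ // x ∈ lamStar C w}

/-- The topology on `X_v` generated by the sets `Ê`, `E ∈ 𝒜_v`. -/
def XvTop (C : CategoryOfPaths Λ) (w : Λ) : TopologicalSpace (Xv C w) :=
  TopologicalSpace.generateFrom
    {t | ∃ E ∈ tailRing C w, t = {x : Xv C w | E ∈ UC C w x.1}}

/-- The vertices of `Λ`. -/
abbrev Vertex (C : CategoryOfPaths Λ) : Type u := {w : Λ // C.r w = w}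

/-- `X`: the disjoint union of the spaces `X_v`. -/
abbrev Xtotal (C : CategoryOfPaths Λ) : Type u := Σ w : Vertex C, Xv C w.1

/-- The disjoint union topology on `X`. -/
def XtotalTop (C : CategoryOfPaths Λ) : TopologicalSpace (Xtotal C) :=
  letI : ∀ w : Vertex C, TopologicalSpace (Xv C w.1) := fun w => XvTop C w.1
  inferInstance

/-- The boundary `∂Λ`: the closure of `Λ**` in `X`. -/
def boundarySet (C : CategoryOfPaths Λ) : Set (Xtotal C) :=
  @closure _ (XtotalTop C) {p : Xtotal C | p.2.1 ∈ lamStarStar C p.1.1}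

/-- An exhaustive subset of `vΛ`. -/
def ExhaustiveAt (C : CategoryOfPaths Λ) (w : Λ) (F : Set Λ) : Prop :=
  ∀ α, C.r α = w → ∃ β ∈ F, pMeets C α β

/-- An aperiodic point of `Λ*`. -/
def pAperiodic (C : CategoryOfPaths Λ) (x : Set Λ) : Prop :=
  ∀ α ∈ x, ∀ β ∈ x, α ≠ β → pShift C α x ≠ pShift C β x

/-- A right-aperiodic point of `wΛ*`. -/
def pRightAperiodicAt (C : CategoryOfPaths Λ) (w : Λ) (x : Set Λ) : Prop :=
  ∀ α β : Λ, C.s α = w → C.s β = w → α ≠ β → pMulStar C α x ≠ pMulStar C β x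

/-- The triples `(α, β, x)` with `s α = s β` and `x ∈ s(α)Λ*`. -/
abbrev pTrip (C : CategoryOfPaths Λ) : Type u :=
  {t : Λ × Λ × Set Λ // C.s t.1 = C.s t.2.1 ∧ t.2.2 ∈ lamStar C (C.s t.1)}

/-- The groupoid equivalence relation on triples. -/
def tripRel (C : CategoryOfPaths Λ) (t t' : pTrip C) : Prop :=
  ∃ (z : Set Λ) (δ δ' : Λ),
    z ∈ lamStar C (C.s δ) ∧ z ∈ lamStar C (C.s δ') ∧
    C.s t.1.1 = C.r δ ∧ C.s t'.1.1 = C.r δ' ∧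
    t.1.2.2 = pMulStar C δ z ∧ t'.1.2.2 = pMulStar C δ' z ∧
    C.comp t.1.1 δ = C.comp t'.1.1 δ' ∧
    C.comp t.1.2.1 δ = C.comp t'.1.2.1 δ'

/-- The ultrafilter space of `𝒜(Λ₀,Λ)_v`. -/
abbrev relXv (C : CategoryOfPaths Λ) (Λ₀ : Set Λ) (w : Λ) : Type u :=
  {U : Set (Set Λ) // IsUltrafilterIn (relAring C Λ₀ Set.univ w) U}

/-- The topology on the ultrafilter space of `𝒜(Λ₀,Λ)_v` generated by the `Ê`. -/
def relXvTop (C : CategoryOfPaths Λ) (Λ₀ : Set Λ) (w : Λ) :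
    TopologicalSpace (relXv C Λ₀ w) :=
  TopologicalSpace.generateFrom
    {t | ∃ E ∈ relAring C Λ₀ Set.univ w, t = {U : relXv C Λ₀ w | E ∈ U.1}}

/-! A point `x` of `v∂Λ` missing `Δ` has the neighbourhood `Ê`, `E = βΛ \ ⋃_{α ∈ Δ} αΛ` for any
`β ∈ x`, so `Ê` contains a maximal directed set `y`. When `Λ` is countable and finitely aligned,
every maximal directed set contains a member of a finite exhaustive set, and such a member
`α ∈ y` contradicts `E ∈ 𝒰_y`. Conversely, a maximal directed set through `a ∈ vΛ` (Zorn) is a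
boundary point, so it contains some `β ∈ Δ`, and `a ⋔ β` by directedness. -/

section Paths

variable (C : CategoryOfPaths Λ)

lemma mem_pTail_self (α : Λ) : α ∈ pTail C α :=
  ⟨C.s α, (C.r_s α).symm, (C.comp_id α).symm⟩

variable {C}

lemma mem_pTail_trans {α β γ : Λ} (hβ : β ∈ pTail C α) (hγ : γ ∈ pTail C β) :
    γ ∈ pTail C α := by
  obtain ⟨b, hb, rfl⟩ := hβ
  obtain ⟨c, hc, rfl⟩ := hγ
  have hbc : C.s b = C.r c := by rw [← C.s_comp hb]; exact hc
  exact ⟨C.comp b c, by rw [C.r_comp hbc]; exact hb, C.comp_assoc hb hbc⟩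

lemma r_eq_of_mem_pTail {α β : Λ} (h : β ∈ pTail C α) : C.r β = C.r α := by
  obtain ⟨b, hb, rfl⟩ := h
  exact C.r_comp hb

lemma pMeets.r_eq {α β : Λ} (h : pMeets C α β) : C.r α = C.r β := by
  obtain ⟨e, hα, hβ⟩ := h
  rw [← r_eq_of_mem_pTail hα, r_eq_of_mem_pTail hβ]

lemma pMeets.of_mem_pTail_left {α α' β : Λ} (h : pMeets C α' β) (hα' : α' ∈ pTail C α) :
    pMeets C α β :=
  let ⟨e, he, hβ⟩ := h
  ⟨e, mem_pTail_trans hα' he, hβ⟩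

end Paths

section Directed

variable {C : CategoryOfPaths Λ} {y : Set Λ}

lemma pDirected.inter_pTail (hy : pDirected C y) (d : Λ) : pDirected C (y ∩ pTail C d) := by
  rintro a ⟨hay, had⟩ b ⟨hby, -⟩
  obtain ⟨c, hc, hcy⟩ := hy a hay b hby
  exact ⟨c, hc, hcy, mem_pTail_trans had hc.1⟩

lemma pDirected.exists_mem_pTail_forall (hy : pDirected C y) (hne : y.Nonempty) {F : Set Λ}
    (hF : F.Finite) (hFy : F ⊆ y) : ∃ d ∈ y, ∀ a ∈ F, d ∈ pTail C a := by
  induction F, hF using Set.Finite.induction_on with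
  | empty =>
    obtain ⟨d, hd⟩ := hne
    exact ⟨d, hd, by simp⟩
  | @insert a F _ _ ih =>
    obtain ⟨d, hdy, hdF⟩ := ih ((Set.subset_insert a F).trans hFy)
    obtain ⟨e, ⟨hea, hed⟩, hey⟩ := hy a (hFy (Set.mem_insert a F)) d hdy
    exact ⟨e, hey, Set.forall_mem_insert.mpr ⟨hea, fun b hb => mem_pTail_trans (hdF b hb) hed⟩⟩

/-- Otherwise a common extension of witnesses against the members of `F` would meet none of
them. -/
lemma pDirected.exists_forall_pMeets (hy : pDirected C y) (hne : y.Nonempty) {F : Set Λ}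
    (hF : F.Finite) (hyF : ∀ d ∈ y, ∃ g ∈ F, pMeets C d g) :
    ∃ g ∈ F, ∀ d ∈ y, pMeets C d g := by
  by_contra! h
  choose f hfy hf using h
  obtain ⟨d, hdy, hdf⟩ := hy.exists_mem_pTail_forall hne (hF.dependent_image f)
    (by rintro _ ⟨g, hg, rfl⟩; exact hfy g hg)
  obtain ⟨g, hgF, hdg⟩ := hyF d hdy
  exact hf g hgF (hdg.of_mem_pTail_left (hdf _ ⟨g, hgF, rfl⟩))

lemma pDirected.exists_forall_pMeets_of_forall_pMeets (hfa : FinitelyAligned C)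
    (hy : pDirected C y) {d e : Λ} (hd : d ∈ y) (he : ∀ d' ∈ y, pMeets C d' e) :
    ∃ e' ∈ pTail C e ∩ pTail C d, ∀ d' ∈ y, pMeets C d' e' := by
  obtain ⟨H, hH, hHeq⟩ := hfa e d
  have hcover : ∀ d' ∈ y ∩ pTail C d, ∃ g ∈ H, pMeets C d' g := by
    rintro d' ⟨hd'y, hd'd⟩
    obtain ⟨x, hxd', hxe⟩ := he d' hd'y
    have hx : x ∈ ⋃ g ∈ H, pTail C g := hHeq ▸ ⟨hxe, mem_pTail_trans hd'd hxd'⟩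
    obtain ⟨g, hg, hxg⟩ := Set.mem_iUnion₂.mp hx
    exact ⟨g, hg, x, hxd', hxg⟩
  obtain ⟨g, hgH, hg⟩ :=
    (hy.inter_pTail d).exists_forall_pMeets ⟨d, hd, mem_pTail_self C d⟩ hH hcover
  refine ⟨g, hHeq ▸ Set.mem_biUnion hgH (mem_pTail_self C g), fun d' hd' => ?_⟩
  obtain ⟨c, ⟨hcd', hcd⟩, hcy⟩ := hy d' hd' d hd
  exact (hg c ⟨hcy, hcd⟩).of_mem_pTail_left hcd'

end Directed

section Maximal

variable {C : CategoryOfPaths Λ} {w : Λ} {y : Set Λ}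

lemma pHereditary_of_mem_lamStarStar (hy : y ∈ lamStarStar C w) : pHereditary C y := by
  obtain ⟨hyw, hydir, hymax⟩ := hy
  intro γ hγ α hγα
  have hseg : y ∪ {β | γ ∈ pTail C β} = y := by
    refine hymax _ ?_ ?_ Set.subset_union_left
    · rintro b (hb | hb)
      · exact hyw hb
      · exact (r_eq_of_mem_pTail hb).symm.trans (hyw hγ)
    · rintro a (ha | ha) b (hb | hb)
      · obtain ⟨e, he, hey⟩ := hydir a ha b hb
        exact ⟨e, he, Or.inl hey⟩
      · obtain ⟨e, he, hey⟩ := hydir a ha γ hγ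
        exact ⟨e, ⟨he.1, mem_pTail_trans hb he.2⟩, Or.inl hey⟩
      · obtain ⟨e, he, hey⟩ := hydir γ hγ b hb
        exact ⟨e, ⟨mem_pTail_trans ha he.1, he.2⟩, Or.inl hey⟩
      · exact ⟨γ, ⟨ha, hb⟩, Or.inl hγ⟩
  exact hseg ▸ Or.inr hγα

lemma lamStar_of_mem_lamStarStar (hy : y ∈ lamStarStar C w) (hne : y.Nonempty) :
    y ∈ lamStar C w :=
  ⟨hne, hy.1, hy.2.1, pHereditary_of_mem_lamStarStar hy⟩

lemma pDirected_sUnion {c : Set (Set Λ)} (hdir : ∀ s ∈ c, pDirected C s)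
    (hc : IsChain (· ⊆ ·) c) : pDirected C (⋃₀ c) := by
  rintro a ⟨s, hs, has⟩ b ⟨t, ht, hbt⟩
  rcases hc.total hs ht with hst | hts
  · obtain ⟨e, he, het⟩ := hdir t ht a (hst has) b hbt
    exact ⟨e, he, t, ht, het⟩
  · obtain ⟨e, he, hes⟩ := hdir s hs a has b (hts hbt)
    exact ⟨e, he, s, hs, hes⟩

lemma exists_mem_lamStarStar {a : Λ} (ha : C.r a = w) : ∃ y ∈ lamStarStar C w, a ∈ y := by
  let S : Set (Set Λ) := {z | z ⊆ pRng C w ∧ pDirected C z ∧ a ∈ z}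
  have hchain : ∀ c ⊆ S, IsChain (· ⊆ ·) c → c.Nonempty → ∃ ub ∈ S, ∀ s ∈ c, s ⊆ ub := by
    intro c hcS hc ⟨s, hs⟩
    refine ⟨⋃₀ c, ⟨?_, pDirected_sUnion (fun t ht => (hcS ht).2.1) hc, s, hs, (hcS hs).2.2⟩,
      fun t ht => Set.subset_sUnion_of_mem ht⟩
    rintro b ⟨t, ht, hbt⟩
    exact (hcS ht).1 hbt
  have hsingleton : {a} ∈ S := by
    refine ⟨by simpa [pRng] using ha, ?_, rfl⟩
    rintro _ rfl _ rfl
    exact ⟨_, ⟨mem_pTail_self C _, mem_pTail_self C _⟩, rfl⟩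
  obtain ⟨y, -, hy⟩ := zorn_subset_nonempty S hchain {a} hsingleton
  exact ⟨y, ⟨hy.1.1, hy.1.2.1, fun z hzw hz hyz =>
    (hy.2 ⟨hzw, hz, hyz hy.1.2.2⟩ hyz).antisymm hyz⟩, hy.1.2.2⟩

/-- Enumerating `y`, one extends `α` step by step, using finite alignment to keep each extension
meeting all of `y`, into a chain `ε₀ = α ≤ ε₁ ≤ ⋯` passing above every element of `y`; the initial
segments of this chain form a directed set containing `y`, hence equal to `y` by maximality. -/
lemma mem_of_forall_pMeets [Countable Λ] (hfa : FinitelyAligned C) (hy : y ∈ lamStarStar C w)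
    (hne : y.Nonempty) {α : Λ} (hα : ∀ d ∈ y, pMeets C d α) : α ∈ y := by
  obtain ⟨hyw, hydir, hymax⟩ := hy
  obtain ⟨g, rfl⟩ := y.to_countable.exists_eq_range hne
  let P := {e : Λ // ∀ d ∈ Set.range g, pMeets C d e}
  have hstep : ∀ (e : P) (n : ℕ), ∃ e' : P, e'.1 ∈ pTail C e.1 ∩ pTail C (g n) := fun e n =>
    let ⟨e', he', hP⟩ := hydir.exists_forall_pMeets_of_forall_pMeets hfa (Set.mem_range_self n) e.2
    ⟨⟨e', hP⟩, he'⟩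
  choose next hnext using hstep
  let ε : ℕ → P := fun n => Nat.rec ⟨α, hα⟩ (fun n e => next e n) n
  have hmono : ∀ {m n}, m ≤ n → (ε n).1 ∈ pTail C (ε m).1 := fun hmn =>
    Nat.le_induction (mem_pTail_self C _) (fun k _ ih => mem_pTail_trans ih (hnext (ε k) k).1)
      _ hmn
  let z : Set Λ := {η | ∃ n, (ε n).1 ∈ pTail C η}
  have hzw : z ⊆ pRng C w := by
    rintro η ⟨n, hn⟩
    calc C.r η = C.r (ε n).1 := (r_eq_of_mem_pTail hn).symm
      _ = C.r α := r_eq_of_mem_pTail (hmono (Nat.zero_le n))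
      _ = w := ((hα _ (Set.mem_range_self 0)).r_eq).symm.trans (hyw (Set.mem_range_self 0))
  have hzdir : pDirected C z := by
    rintro a ⟨m, hm⟩ b ⟨n, hn⟩
    exact ⟨(ε (max m n)).1, ⟨mem_pTail_trans hm (hmono (le_max_left m n)),
      mem_pTail_trans hn (hmono (le_max_right m n))⟩, max m n, mem_pTail_self C _⟩
  have hyz : Set.range g ⊆ z := by
    rintro _ ⟨n, rfl⟩
    exact ⟨n + 1, (hnext (ε n) n).2⟩
  exact hymax z hzw hzdir hyz ▸ ⟨0, mem_pTail_self C α⟩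

lemma exists_mem_of_exhaustiveAt [Countable Λ] (hfa : FinitelyAligned C) {Δ : Set Λ}
    (hΔ : Δ.Finite) (hex : ExhaustiveAt C w Δ) (hy : y ∈ lamStarStar C w) (hne : y.Nonempty) :
    ∃ α ∈ Δ, α ∈ y :=
  let ⟨α, hαΔ, hα⟩ := hy.2.1.exists_forall_pMeets hne hΔ fun d hd => hex d (hy.1 hd)
  ⟨α, hαΔ, mem_of_forall_pMeets hfa hy hne hα⟩

end Maximal

section SetRing

variable {γ : Type v} {S : Set γ} {G : Set (Set γ)} {E : Set γ}

lemma mem_setRingGenOn_of_mem (h : E ∈ G) : E ∈ setRingGenOn S G :=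
  Set.mem_sInter.mpr fun _ hR => hR.2 h

lemma diff_mem_setRingGenOn {F : Set γ} (hE : E ∈ setRingGenOn S G)
    (hF : F ∈ setRingGenOn S G) : E \ F ∈ setRingGenOn S G :=
  Set.mem_sInter.mpr fun R hR =>
    hR.1.1.2.2.2 E (Set.mem_sInter.mp hE R hR) F (Set.mem_sInter.mp hF R hR)

lemma diff_biUnion_mem_setRingGenOn {ι : Type*} (hE : E ∈ setRingGenOn S G)
    {s : Set ι} (hs : s.Finite) {t : ι → Set γ} (ht : ∀ i ∈ s, t i ∈ setRingGenOn S G) :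
    E \ ⋃ i ∈ s, t i ∈ setRingGenOn S G := by
  induction s, hs using Set.Finite.induction_on with
  | empty => simpa using hE
  | @insert i s _ _ ih =>
    rw [Set.biUnion_insert, Set.union_comm, ← Set.sdiff_sdiff]
    exact diff_mem_setRingGenOn (ih fun j hj => ht j (Set.mem_insert_of_mem i hj))
      (ht i (Set.mem_insert i s))

end SetRing

section Boundary

variable {C : CategoryOfPaths Λ}

lemma pTail_mem_tailRing {w α : Λ} (h : C.r α = w) : pTail C α ∈ tailRing C w :=
  mem_setRingGenOn_of_mem ⟨α, h, rfl⟩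

lemma mk_mem_boundarySet {v : Λ} (hv : C.r v = v) {y : Set Λ} (hy : y ∈ lamStarStar C v)
    (hy' : y ∈ lamStar C v) :
    (⟨⟨v, hv⟩, ⟨y, hy'⟩⟩ : Xtotal C) ∈ boundarySet C :=
  @subset_closure _ (XtotalTop C) _ _ hy

lemma exists_lamStarStar_mem_UC_of_mem_boundarySet {v : Λ} (hv : C.r v = v) {x : Set Λ}
    (hx : x ∈ lamStar C v) (hbd : (⟨⟨v, hv⟩, ⟨x, hx⟩⟩ : Xtotal C) ∈ boundarySet C)
    {E : Set Λ} (hE : E ∈ UC C v x) : ∃ y ∈ lamStarStar C v, E ∈ UC C v y := by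
  let _ : ∀ w : Vertex C, TopologicalSpace (Xv C w.1) := fun w => XvTop C w.1
  let Ehat : Set (Xv C v) := {q | E ∈ UC C v q.1}
  have hEopen : @IsOpen _ (XvTop C v) Ehat :=
    TopologicalSpace.isOpen_generateFrom_of_mem ⟨E, hE.1, rfl⟩
  have hopen : IsOpen (Sigma.mk (β := fun w : Vertex C => Xv C w.1) ⟨v, hv⟩ '' Ehat) :=
    isOpenMap_sigmaMk _ hEopen
  obtain ⟨_, ⟨q, hq, rfl⟩, hqmax⟩ :=
    mem_closure_iff.mp hbd _ hopen (Set.mem_image_of_mem _ hE)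
  exact ⟨q.1, hqmax, hq⟩

end Boundary

/-- Lemma 8.1. A finite subset `Δ ⊆ vΛ` is exhaustive iff
`v∂Λ ⊆ ⋃_{α ∈ Δ} {C ∈ vΛ* : α ∈ C}`. -/
theorem statement14 {Λ : Type u} [Countable Λ] (C : CategoryOfPaths Λ)
    (hfa : FinitelyAligned C) (v : Λ) (hv : C.r v = v)
    (Δ : Set Λ) (hΔ : Δ ⊆ pRng C v) (hfin : Δ.Finite) :
    ExhaustiveAt C v Δ ↔
      ∀ (x : Set Λ) (hx : x ∈ lamStar C v),
        (Sigma.mk (⟨v, hv⟩ : Vertex C) (⟨x, hx⟩ : Xv C v) : Xtotal C) ∈ boundarySet C →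
        ∃ α ∈ Δ, α ∈ x := by
  constructor
  · intro hex x hx hbd
    by_contra! hxΔ
    obtain ⟨β, hβ⟩ := hx.1
    set E := pTail C β \ ⋃ α ∈ Δ, pTail C α
    have hE : E ∈ UC C v x := by
      refine ⟨diff_biUnion_mem_setRingGenOn (pTail_mem_tailRing (hx.2.1 hβ)) hfin
        fun α hα => pTail_mem_tailRing (hΔ hα), β, hβ, fun e ⟨hex, heβ⟩ => ⟨heβ, ?_⟩⟩
      simp only [Set.mem_iUnion₂, not_exists]
      exact fun α hα heα => hxΔ α hα (hx.2.2.2 e hex α heα)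
    obtain ⟨y, hy, -, γ, hγ, hγE⟩ := exists_lamStarStar_mem_UC_of_mem_boundarySet hv hx hbd hE
    obtain ⟨α, hαΔ, hαy⟩ := exists_mem_of_exhaustiveAt hfa hfin hex hy ⟨γ, hγ⟩
    obtain ⟨e, ⟨heγ, heα⟩, hey⟩ := hy.2.1 γ hγ α hαy
    exact (hγE ⟨hey, heγ⟩).2 (Set.mem_biUnion hαΔ heα)
  · intro hbd a ha
    obtain ⟨y, hy, hay⟩ := exists_mem_lamStarStar ha
    have hy' := lamStar_of_mem_lamStarStar hy ⟨a, hay⟩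
    obtain ⟨β, hβΔ, hβy⟩ := hbd y hy' (mk_mem_boundarySet hv hy hy')
    obtain ⟨e, he, -⟩ := hy.2.1 a hay β hβy
    exact ⟨β, hβΔ, e, he⟩
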